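/- Let X be a symmetric n×n matrix of variables. For any index i and j ≠ i, the monomial operator ∂²/(∂x_{ii}∂x_{ij}) annihilates perm(X). -/

import Mathlib

/-!
A term `∏ₖ x_{k σ(k)}` of the permanent involves `x_{ii}` only if `σ` fixes `i`, and then it
cannot involve `x_{ij}`, since `σ i = j` or `σ j = i` would contradict `σ i = i ≠ j`.
As partial derivatives commute, each term is killed by one of the two derivatives.
-/

open MvPolynomial

/-- The permanent of the generic symmetric `n × n` matrix. -/
noncomputable def symPerm (K : Type*) [Field K] (n : ℕ) : MvPolynomial (Sym2 (Fin n)) K :=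
  ∑ σ : Equiv.Perm (Fin n), ∏ i : Fin n, X s(i, σ i)

namespace MvPolynomial

variable {R σ : Type*}

theorem pderiv_pderiv_comm [CommRing R] (a b : σ) (p : MvPolynomial σ R) :
    pderiv a (pderiv b p) = pderiv b (pderiv a p) := by
  -- The commutator of two derivations is a derivation, and this one vanishes on every `X k`.
  have hbracket : ⁅pderiv a, pderiv b⁆ = (0 : Derivation R (MvPolynomial σ R) _) :=
    derivation_ext fun k => by
      classical
      rw [Derivation.commutator_apply]
      simp [pderiv_X, Pi.single_apply, apply_ite]
  have := Derivation.commutator_apply (D1 := pderiv a) (D2 := pderiv b) (a := p)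
  rwa [hbracket, Derivation.zero_apply, eq_comm, sub_eq_zero] at this

theorem pderiv_prod_X_eq_zero [CommSemiring R] [Nontrivial R] {ι : Type*} (s : Finset ι)
    (f : ι → σ) {a : σ} (ha : ∀ k ∈ s, f k ≠ a) :
    pderiv a (∏ k ∈ s, (X (f k) : MvPolynomial σ R)) = 0 := by
  classical
  refine pderiv_eq_zero_of_notMem_vars fun hmem => ?_
  obtain ⟨k, hk, hak⟩ := Finset.mem_biUnion.mp (vars_prod _ hmem)
  rw [vars_X, Finset.mem_singleton] at hak
  exact ha k hk hak.symm

end MvPolynomial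

namespace Equiv.Perm

variable {α : Type*} (σ : Equiv.Perm α)

theorem sym2_mk_apply_ne_diag {i : α} (h : σ i ≠ i) (k : α) : s(k, σ k) ≠ s(i, i) := by
  rw [Ne, Sym2.eq_iff, or_self]
  rintro ⟨rfl, hk⟩
  exact h hk

theorem sym2_mk_apply_ne_of_fixed {i j : α} (h : σ i = i) (hij : j ≠ i) (k : α) :
    s(k, σ k) ≠ s(i, j) := by
  rw [Ne, Sym2.eq_iff]
  rintro (⟨rfl, hk⟩ | ⟨rfl, hk⟩)
  · exact hij (hk.symm.trans h)
  · exact hij (σ.injective (hk.trans h.symm))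

end Equiv.Perm

theorem monomial_annihilates_perm_general {K : Type*} [Field K]
    (n : ℕ) (i j : Fin n) (hij : j ≠ i) :
    pderiv s(i, i) (pderiv s(i, j) (symPerm K n)) = 0 := by
  rw [symPerm, map_sum, map_sum]
  refine Finset.sum_eq_zero fun σ _ => ?_
  by_cases hσ : σ i = i
  · rw [pderiv_prod_X_eq_zero _ _ fun k _ => σ.sym2_mk_apply_ne_of_fixed hσ hij k, map_zero]
  · rw [pderiv_pderiv_comm,
      pderiv_prod_X_eq_zero _ _ fun k _ => σ.sym2_mk_apply_ne_diag hσ k, map_zero]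

/-- For the permanent of the generic symmetric `n × n` matrix, the monomial operator
`∂²/(∂x_{ii}∂x_{ij})` (with `j ≠ i`) annihilates `perm X`. -/
theorem monomial_annihilates_perm {K : Type*} [Field K] [CharZero K]
    (n : ℕ) (i j : Fin n) (hij : j ≠ i) :
    pderiv s(i, i) (pderiv s(i, j) (symPerm K n)) = 0 :=
  monomial_annihilates_perm_general n i j hij
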